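/- Let Ω ⊆ ℂ be open and let f, N : Ω → ℝ⁴ be smooth, and let ⟨v, w⟩ := Σ_{k=1}^{4} v_k w_k denote the ℂ-bilinear form on ℂ⁴ extending the Euclidean inner product. Assume on Ω: ⟨f, f⟩ = 1, ⟨N, N⟩ = 1, ⟨f, N⟩ = 0, ⟨N, f_z⟩ = 0 (N is a unit normal of f along S³), ⟨f_z, f_z⟩ = 0 and ⟨f_z, f_z̄⟩ = e^û for a smooth function û : Ω → ℝ (f is a conformal immersion with metric 2e^û dz dz̄), and ⟨f_{zz̄}, N⟩ = 0 (f is minimal). Set Q := ⟨f_{zz}, N⟩. Then on Ω: (i) N_z = −Q·e^{−û}·f_z̄; (ii) ⟨N_z, N_z⟩ = 0 and ⟨N_z, N_z̄⟩ = |Q|² e^{−û}; and (iii) the map 𝔣 := (f + iN)/√2 satisfies ⟨𝔣_z, 𝔣_z⟩ = −iQ and ⟨𝔣_z, conj(𝔣_z)⟩ = (e^û + |Q|² e^{−û})/2. -/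

import Mathlib

open Complex ComplexConjugate

/-- Wirtinger derivative `g_z = (∂ₓg - i ∂_y g)/2`. -/
noncomputable def wderivZ (g : ℂ → ℂ) (w : ℂ) : ℂ :=
  (fderiv ℝ g w 1 - Complex.I * fderiv ℝ g w Complex.I) / 2

/-- Wirtinger derivative `g_z̄ = (∂ₓg + i ∂_y g)/2`. -/
noncomputable def wderivZbar (g : ℂ → ℂ) (w : ℂ) : ℂ :=
  (fderiv ℝ g w 1 + Complex.I * fderiv ℝ g w Complex.I) / 2

/-- Componentwise Wirtinger derivative `g_z` on `ℂ⁴`-valued maps. -/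
noncomputable def vderivZ (g : ℂ → Fin 4 → ℂ) (w : ℂ) : Fin 4 → ℂ :=
  fun k => wderivZ (fun z => g z k) w

/-- Componentwise Wirtinger derivative `g_z̄` on `ℂ⁴`-valued maps. -/
noncomputable def vderivZbar (g : ℂ → Fin 4 → ℂ) (w : ℂ) : Fin 4 → ℂ :=
  fun k => wderivZbar (fun z => g z k) w

/-- The `ℂ`-bilinear form `⟨v, w⟩ = ∑ vₖ wₖ` on `ℂ⁴`. -/
noncomputable def bilin (v w : Fin 4 → ℂ) : ℂ := ∑ k, v k * w k

/-- Complexification of an `ℝ⁴`-valued map. -/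
def cx (f : ℂ → Fin 4 → ℝ) (w : ℂ) : Fin 4 → ℂ := fun k => (f w k : ℂ)

/-- `𝔣 := (f + iN)/√2`. -/
noncomputable def liftF (f N : ℂ → Fin 4 → ℝ) (w : ℂ) : Fin 4 → ℂ :=
  fun k => ((f w k : ℂ) + Complex.I * (N w k : ℂ)) / (Real.sqrt 2 : ℂ)

/-- The Hopf differential coefficient `Q = ⟨f_zz, N⟩`. -/
noncomputable def hopfQ (f N : ℂ → Fin 4 → ℝ) (w : ℂ) : ℂ :=
  bilin (vderivZ (fun z => vderivZ (cx f) z) w) (cx N w)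


/-!
Differentiating `⟨f, f⟩ = 1`, `⟨N, N⟩ = 1`, `⟨f, N⟩ = 0` and `⟨N, f_z⟩ = 0` shows that `N_z`
pairs with `f, N, f_z, f_z̄` to `0, 0, -Q, 0`, the last value by minimality. The Gram matrix of
`(f, N, f_z, f_z̄)` is block diagonal with blocks `1, 1` and `[[0, e^û], [e^û, 0]]`, so this
frame is a basis of `ℂ⁴` and `N_z` is determined by these pairings: `N_z = -Q e^{-û} f_z̄`.
Everything else follows by expanding bilinearly, using `f_z̄ = conj f_z` and
`⟨f_z̄, f_z̄⟩ = conj ⟨f_z, f_z⟩ = 0`.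
-/

open Filter Topology
open scoped Matrix

theorem bilin_eq_dotProduct (v v' : Fin 4 → ℂ) : bilin v v' = v ⬝ᵥ v' := rfl

section Wirtinger

variable {w : ℂ}

theorem Filter.EventuallyEq.wderivZ_eq {g g' : ℂ → ℂ} (h : g =ᶠ[𝓝 w] g') :
    wderivZ g w = wderivZ g' w := by
  simp only [wderivZ, h.fderiv_eq]

theorem Filter.EventuallyEq.wderivZbar_eq {g g' : ℂ → ℂ} (h : g =ᶠ[𝓝 w] g') :
    wderivZbar g w = wderivZbar g' w := by
  simp only [wderivZbar, h.fderiv_eq]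

@[simp]
theorem wderivZ_const (c : ℂ) : wderivZ (fun _ => c) w = 0 := by
  simp [wderivZ]

@[simp]
theorem wderivZbar_const (c : ℂ) : wderivZbar (fun _ => c) w = 0 := by
  simp [wderivZbar]

theorem wderivZ_add {g h : ℂ → ℂ} (hg : DifferentiableAt ℝ g w)
    (hh : DifferentiableAt ℝ h w) :
    wderivZ (fun z => g z + h z) w = wderivZ g w + wderivZ h w := by
  simp only [wderivZ, fderiv_fun_add hg hh, add_apply]
  ring

theorem wderivZ_const_mul {g : ℂ → ℂ} (hg : DifferentiableAt ℝ g w) (c : ℂ) :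
    wderivZ (fun z => c * g z) w = c * wderivZ g w := by
  simp only [wderivZ, fderiv_const_mul hg c, smul_apply, smul_eq_mul]
  ring

theorem wderivZbar_ofReal {u : ℂ → ℝ} (hu : DifferentiableAt ℝ u w) :
    wderivZbar (fun z => (u z : ℂ)) w = conj (wderivZ (fun z => (u z : ℂ)) w) := by
  have hD : fderiv ℝ (fun z => (u z : ℂ)) w = ofRealCLM.comp (fderiv ℝ u w) :=
    (ofRealCLM.hasFDerivAt.comp w hu.hasFDerivAt).fderiv
  simp [wderivZ, wderivZbar, hD, map_ofNat]

theorem ContDiffAt.wderivZ {n : WithTop ℕ∞} {g : ℂ → ℂ} (hg : ContDiffAt ℝ (n + 1) g w) :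
    ContDiffAt ℝ n (wderivZ g) w := by
  have hD := hg.fderiv_right le_rfl
  exact (((hD.clm_apply contDiffAt_const).sub
    (contDiffAt_const.mul (hD.clm_apply contDiffAt_const))).div_const 2)

end Wirtinger

section VectorWirtinger

variable {w : ℂ}

theorem hasFDerivAt_dotProduct {E ι : Type*} [NormedAddCommGroup E] [NormedSpace ℝ E]
    [Fintype ι] {g h : E → ι → ℂ} {x : E}
    (hg : DifferentiableAt ℝ g x) (hh : DifferentiableAt ℝ h x) :
    HasFDerivAt (fun z => g z ⬝ᵥ h z)
      (∑ k, (g x k • fderiv ℝ (fun z => h z k) x + h x k • fderiv ℝ (fun z => g z k) x)) x :=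
  HasFDerivAt.fun_sum fun k _ =>
    (differentiableAt_pi.1 hg k).hasFDerivAt.mul (differentiableAt_pi.1 hh k).hasFDerivAt

theorem wderivZ_dotProduct {g h : ℂ → Fin 4 → ℂ}
    (hg : DifferentiableAt ℝ g w) (hh : DifferentiableAt ℝ h w) :
    wderivZ (fun z => g z ⬝ᵥ h z) w = vderivZ g w ⬝ᵥ h w + g w ⬝ᵥ vderivZ h w := by
  rw [wderivZ, (hasFDerivAt_dotProduct hg hh).fderiv]
  simp only [add_apply, smul_apply, smul_eq_mul, dotProduct, vderivZ, wderivZ,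
    Fin.sum_univ_four]
  ring

theorem wderivZbar_dotProduct {g h : ℂ → Fin 4 → ℂ}
    (hg : DifferentiableAt ℝ g w) (hh : DifferentiableAt ℝ h w) :
    wderivZbar (fun z => g z ⬝ᵥ h z) w = vderivZbar g w ⬝ᵥ h w + g w ⬝ᵥ vderivZbar h w := by
  rw [wderivZbar, (hasFDerivAt_dotProduct hg hh).fderiv]
  simp only [add_apply, smul_apply, smul_eq_mul, dotProduct, vderivZbar, wderivZbar,
    Fin.sum_univ_four]
  ring

theorem vderivZ_dotProduct_add_eq_zero {g h : ℂ → Fin 4 → ℂ} {c : ℂ}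
    (hg : DifferentiableAt ℝ g w) (hh : DifferentiableAt ℝ h w)
    (hc : (fun z => g z ⬝ᵥ h z) =ᶠ[𝓝 w] fun _ => c) :
    vderivZ g w ⬝ᵥ h w + g w ⬝ᵥ vderivZ h w = 0 := by
  rw [← wderivZ_dotProduct hg hh, hc.wderivZ_eq, wderivZ_const]

theorem vderivZbar_dotProduct_add_eq_zero {g h : ℂ → Fin 4 → ℂ} {c : ℂ}
    (hg : DifferentiableAt ℝ g w) (hh : DifferentiableAt ℝ h w)
    (hc : (fun z => g z ⬝ᵥ h z) =ᶠ[𝓝 w] fun _ => c) :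
    vderivZbar g w ⬝ᵥ h w + g w ⬝ᵥ vderivZbar h w = 0 := by
  rw [← wderivZbar_dotProduct hg hh, hc.wderivZbar_eq, wderivZbar_const]

theorem ContDiffAt.vderivZ {n : WithTop ℕ∞} {g : ℂ → Fin 4 → ℂ}
    (hg : ContDiffAt ℝ (n + 1) g w) : ContDiffAt ℝ n (vderivZ g) w :=
  contDiffAt_pi.2 fun k => (contDiffAt_pi.1 hg k).wderivZ

theorem ContDiffAt.cx {n : WithTop ℕ∞} {f : ℂ → Fin 4 → ℝ} (hf : ContDiffAt ℝ n f w) :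
    ContDiffAt ℝ n (cx f) w :=
  contDiffAt_pi.2 fun k => ofRealCLM.contDiff.contDiffAt.comp w (contDiffAt_pi.1 hf k)

theorem DifferentiableAt.cx {f : ℂ → Fin 4 → ℝ} (hf : DifferentiableAt ℝ f w) :
    DifferentiableAt ℝ (cx f) w :=
  differentiableAt_pi.2 fun k => ofRealCLM.differentiableAt.comp w (differentiableAt_pi.1 hf k)

theorem star_cx (f : ℂ → Fin 4 → ℝ) (w : ℂ) : star (cx f w) = cx f w :=
  funext fun k => conj_ofReal (f w k)

theorem star_vderivZ_cx {f : ℂ → Fin 4 → ℝ} (hf : DifferentiableAt ℝ f w) :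
    star (vderivZ (cx f) w) = vderivZbar (cx f) w :=
  funext fun k => (wderivZbar_ofReal (differentiableAt_pi.1 hf k)).symm

theorem vderivZ_liftF {f N : ℂ → Fin 4 → ℝ} (hf : DifferentiableAt ℝ f w)
    (hN : DifferentiableAt ℝ N w) :
    vderivZ (liftF f N) w = (Real.sqrt 2 : ℂ)⁻¹ • (vderivZ (cx f) w + I • vderivZ (cx N) w) := by
  funext k
  have hfk := differentiableAt_pi.1 hf.cx k
  have hNk := differentiableAt_pi.1 hN.cx k
  have hsum : DifferentiableAt ℝ (fun z => cx f z k + I * cx N z k) w := hfk.add (hNk.const_mul I)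
  show wderivZ (fun z => (cx f z k + I * cx N z k) / (Real.sqrt 2 : ℂ)) w = _
  simp only [div_eq_inv_mul]
  rw [wderivZ_const_mul hsum, wderivZ_add hfk (hNk.const_mul I), wderivZ_const_mul hNk]
  rfl

end VectorWirtinger

theorem ofReal_exp_mul_ofReal_exp_neg (u : ℝ) : (Real.exp u : ℂ) * Real.exp (-u) = 1 := by
  rw [← ofReal_mul, ← Real.exp_add, add_neg_cancel, Real.exp_zero, ofReal_one]

theorem ofReal_sqrt_two_inv_mul_self : (Real.sqrt 2 : ℂ)⁻¹ * (Real.sqrt 2 : ℂ)⁻¹ = 2⁻¹ := by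
  rw [← mul_inv, ← ofReal_mul, Real.mul_self_sqrt zero_le_two, ofReal_ofNat]

/-- `F, N, Fz` stand for the values of `f, N, f_z` at one point; `star` is componentwise complex
conjugation, so `star Fz` is `f_z̄`. -/
structure IsAdaptedFrame (F N Fz : Fin 4 → ℂ) (u : ℝ) : Prop where
  star_F : star F = F
  star_N : star N = N
  F_F : F ⬝ᵥ F = 1
  N_N : N ⬝ᵥ N = 1
  F_N : F ⬝ᵥ N = 0
  F_Fz : F ⬝ᵥ Fz = 0
  N_Fz : N ⬝ᵥ Fz = 0
  Fz_Fz : Fz ⬝ᵥ Fz = 0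
  Fz_star_Fz : Fz ⬝ᵥ star Fz = Real.exp u

namespace IsAdaptedFrame

variable {F N Fz : Fin 4 → ℂ} {u : ℝ}

theorem F_star_Fz (h : IsAdaptedFrame F N Fz u) : F ⬝ᵥ star Fz = 0 := by
  rw [← h.star_F, Matrix.star_dotProduct_star, dotProduct_comm, h.F_Fz, star_zero]

theorem N_star_Fz (h : IsAdaptedFrame F N Fz u) : N ⬝ᵥ star Fz = 0 := by
  rw [← h.star_N, Matrix.star_dotProduct_star, dotProduct_comm, h.N_Fz, star_zero]

theorem star_Fz_star_Fz (h : IsAdaptedFrame F N Fz u) : star Fz ⬝ᵥ star Fz = 0 := by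
  rw [Matrix.star_dotProduct_star, h.Fz_Fz, star_zero]

theorem det_ne_zero (h : IsAdaptedFrame F N Fz u) :
    (Matrix.of ![F, N, Fz, star Fz]).det ≠ 0 := by
  set M := Matrix.of ![F, N, Fz, star Fz]
  have hgram : M * Mᵀ =
      !![1, 0, 0, 0; 0, 1, 0, 0; 0, 0, 0, (Real.exp u : ℂ); 0, 0, (Real.exp u : ℂ), 0] := by
    ext i j
    rw [show (M * Mᵀ) i j = ![F, N, Fz, star Fz] i ⬝ᵥ ![F, N, Fz, star Fz] j from rfl]
    fin_cases i <;> fin_cases j <;>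
      simp [h.F_F, h.N_N, h.F_N, h.F_Fz, h.N_Fz, h.Fz_Fz, h.Fz_star_Fz, h.F_star_Fz, h.N_star_Fz,
        h.star_Fz_star_Fz, dotProduct_comm _ F, dotProduct_comm _ N, dotProduct_comm (star Fz) Fz]
  have hdet := congrArg Matrix.det hgram
  rw [Matrix.det_mul, Matrix.det_transpose] at hdet
  intro h0
  simp [h0, Matrix.det_succ_row_zero, Fin.sum_univ_succ] at hdet

theorem eq_zero_of_dotProduct_eq_zero (h : IsAdaptedFrame F N Fz u) {x : Fin 4 → ℂ}
    (hF : F ⬝ᵥ x = 0) (hN : N ⬝ᵥ x = 0) (hFz : Fz ⬝ᵥ x = 0) (hFzb : star Fz ⬝ᵥ x = 0) :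
    x = 0 := by
  refine Matrix.eq_zero_of_mulVec_eq_zero h.det_ne_zero (funext fun i => ?_)
  fin_cases i <;> assumption

variable {Nz : Fin 4 → ℂ} {Q : ℂ}

theorem eq_of_dotProduct (h : IsAdaptedFrame F N Fz u) (hF : F ⬝ᵥ Nz = 0) (hN : N ⬝ᵥ Nz = 0)
    (hFz : Fz ⬝ᵥ Nz = -Q) (hFzb : star Fz ⬝ᵥ Nz = 0) :
    Nz = -(Q * Real.exp (-u)) • star Fz := by
  rw [← sub_eq_zero, neg_smul, sub_neg_eq_add]
  apply h.eq_zero_of_dotProduct_eq_zero <;>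
    simp only [dotProduct_add, dotProduct_smul, smul_eq_mul, h.F_star_Fz, h.N_star_Fz,
      h.Fz_star_Fz, h.star_Fz_star_Fz, hF, hN, hFz, hFzb, mul_zero, add_zero]
  linear_combination Q * ofReal_exp_mul_ofReal_exp_neg u

theorem Nz_Nz (h : IsAdaptedFrame F N Fz u) (hNz : Nz = -(Q * Real.exp (-u)) • star Fz) :
    Nz ⬝ᵥ Nz = 0 := by
  simp [hNz, h.star_Fz_star_Fz]

theorem Nz_star_Nz (h : IsAdaptedFrame F N Fz u) (hNz : Nz = -(Q * Real.exp (-u)) • star Fz) :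
    Nz ⬝ᵥ star Nz = (‖Q‖ : ℂ) ^ 2 * Real.exp (-u) := by
  have hnorm : (‖Q‖ : ℂ) ^ 2 = Q * conj Q := by
    rw [mul_conj, normSq_eq_norm_sq, ofReal_pow]
  rw [hNz, star_smul, star_star, smul_dotProduct, dotProduct_smul, dotProduct_comm,
    h.Fz_star_Fz, hnorm]
  simp only [smul_eq_mul, star_neg, star_mul', star_def, conj_ofReal]
  linear_combination Q * conj Q * Real.exp (-u) * ofReal_exp_mul_ofReal_exp_neg u

theorem Fz_Nz (h : IsAdaptedFrame F N Fz u) (hNz : Nz = -(Q * Real.exp (-u)) • star Fz) :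
    Fz ⬝ᵥ Nz = -Q := by
  rw [hNz, dotProduct_smul, h.Fz_star_Fz, smul_eq_mul]
  linear_combination -Q * ofReal_exp_mul_ofReal_exp_neg u

theorem lift_dotProduct_self (h : IsAdaptedFrame F N Fz u)
    (hNz : Nz = -(Q * Real.exp (-u)) • star Fz) :
    ((Real.sqrt 2 : ℂ)⁻¹ • (Fz + I • Nz)) ⬝ᵥ ((Real.sqrt 2 : ℂ)⁻¹ • (Fz + I • Nz)) = -I * Q := by
  simp only [dotProduct_add, add_dotProduct, dotProduct_smul, smul_dotProduct, smul_eq_mul,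
    dotProduct_comm Nz Fz, h.Fz_Fz, h.Fz_Nz hNz, h.Nz_Nz hNz]
  linear_combination (-2 * I * Q) * ofReal_sqrt_two_inv_mul_self

theorem lift_dotProduct_star (h : IsAdaptedFrame F N Fz u)
    (hNz : Nz = -(Q * Real.exp (-u)) • star Fz) :
    ((Real.sqrt 2 : ℂ)⁻¹ • (Fz + I • Nz)) ⬝ᵥ star ((Real.sqrt 2 : ℂ)⁻¹ • (Fz + I • Nz)) =
      (Real.exp u + (‖Q‖ : ℂ) ^ 2 * Real.exp (-u)) / 2 := by
  have hFz_star_Nz : Fz ⬝ᵥ star Nz = 0 := by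
    rw [hNz, star_smul, star_star, dotProduct_smul, h.Fz_Fz, smul_zero]
  have hNz_star_Fz : Nz ⬝ᵥ star Fz = 0 := by
    rw [hNz, smul_dotProduct, h.star_Fz_star_Fz, smul_zero]
  simp only [star_smul, star_add, dotProduct_add, add_dotProduct, dotProduct_smul,
    smul_dotProduct, smul_eq_mul, star_def, map_inv₀, conj_ofReal, conj_I, h.Fz_star_Fz,
    hFz_star_Nz, hNz_star_Fz, h.Nz_star_Nz hNz]
  linear_combination (Real.exp u + (‖Q‖ : ℂ) ^ 2 * Real.exp (-u)) * ofReal_sqrt_two_inv_mul_self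
    - (Real.sqrt 2 : ℂ)⁻¹ * (Real.sqrt 2 : ℂ)⁻¹ * (‖Q‖ : ℂ) ^ 2 * Real.exp (-u) * I_sq

end IsAdaptedFrame

section Surface

variable {f N : ℂ → Fin 4 → ℝ} {w : ℂ}

theorem isAdaptedFrame_of_conformal {u : ℝ} (hf : DifferentiableAt ℝ f w)
    (hff : (fun z => cx f z ⬝ᵥ cx f z) =ᶠ[𝓝 w] fun _ => 1)
    (hNN : cx N w ⬝ᵥ cx N w = 1) (hfN : cx f w ⬝ᵥ cx N w = 0)
    (hNfz : cx N w ⬝ᵥ vderivZ (cx f) w = 0)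
    (hconf : vderivZ (cx f) w ⬝ᵥ vderivZ (cx f) w = 0)
    (hmetric : vderivZ (cx f) w ⬝ᵥ vderivZbar (cx f) w = Real.exp u) :
    IsAdaptedFrame (cx f w) (cx N w) (vderivZ (cx f) w) u where
  star_F := star_cx f w
  star_N := star_cx N w
  F_F := hff.eq_of_nhds
  N_N := hNN
  F_N := hfN
  F_Fz := by
    have hd := vderivZ_dotProduct_add_eq_zero hf.cx hf.cx hff
    rw [dotProduct_comm] at hd
    linear_combination hd / 2
  N_Fz := hNfz
  Fz_Fz := hconf
  Fz_star_Fz := by rw [star_vderivZ_cx hf, hmetric]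

theorem vderivZ_cx_normal {u : ℝ}
    (hframe : IsAdaptedFrame (cx f w) (cx N w) (vderivZ (cx f) w) u)
    (hf : ContDiffAt ℝ 2 f w) (hN : DifferentiableAt ℝ N w)
    (hNN : (fun z => cx N z ⬝ᵥ cx N z) =ᶠ[𝓝 w] fun _ => 1)
    (hfN : (fun z => cx f z ⬝ᵥ cx N z) =ᶠ[𝓝 w] fun _ => 0)
    (hNfz : (fun z => cx N z ⬝ᵥ vderivZ (cx f) z) =ᶠ[𝓝 w] fun _ => 0)
    (hmin : vderivZbar (fun z => vderivZ (cx f) z) w ⬝ᵥ cx N w = 0) :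
    vderivZ (cx N) w = -(hopfQ f N w * Real.exp (-u)) • star (vderivZ (cx f) w) := by
  have hf₁ : DifferentiableAt ℝ (cx f) w := (hf.differentiableAt (by norm_num)).cx
  have hfz : DifferentiableAt ℝ (vderivZ (cx f)) w :=
    (hf.cx.vderivZ (n := 1)).differentiableAt one_ne_zero
  have hN₁ : DifferentiableAt ℝ (cx N) w := hN.cx
  apply hframe.eq_of_dotProduct
  · have hd := vderivZ_dotProduct_add_eq_zero hf₁ hN₁ hfN
    rw [dotProduct_comm, hframe.N_Fz] at hd
    linear_combination hd
  · have hd := vderivZ_dotProduct_add_eq_zero hN₁ hN₁ hNN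
    rw [dotProduct_comm] at hd
    linear_combination hd / 2
  · have hd := vderivZ_dotProduct_add_eq_zero hN₁ hfz hNfz
    rw [dotProduct_comm (cx N w)] at hd
    rw [dotProduct_comm, hopfQ, bilin_eq_dotProduct]
    linear_combination hd
  · have hd := vderivZbar_dotProduct_add_eq_zero hN₁ hfz hNfz
    rw [dotProduct_comm (cx N w), hmin, add_zero, ← star_vderivZ_cx hN] at hd
    rw [Matrix.star_dotProduct, hd, star_zero]

end Surface

theorem stmt10_general (Ω : Set ℂ) (hΩ : IsOpen Ω)
    (f N : ℂ → Fin 4 → ℝ) (uh : ℂ → ℝ)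
    (hf : ContDiffOn ℝ (⊤ : ℕ∞) f Ω)
    (hN : ContDiffOn ℝ (⊤ : ℕ∞) N Ω)
    (hff : ∀ w ∈ Ω, bilin (cx f w) (cx f w) = 1)
    (hNN : ∀ w ∈ Ω, bilin (cx N w) (cx N w) = 1)
    (hfN : ∀ w ∈ Ω, bilin (cx f w) (cx N w) = 0)
    (hNfz : ∀ w ∈ Ω, bilin (cx N w) (vderivZ (cx f) w) = 0)
    (hconf : ∀ w ∈ Ω, bilin (vderivZ (cx f) w) (vderivZ (cx f) w) = 0)
    (hmetric : ∀ w ∈ Ω,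
      bilin (vderivZ (cx f) w) (vderivZbar (cx f) w) = (Real.exp (uh w) : ℂ))
    (hmin : ∀ w ∈ Ω,
      bilin (vderivZbar (fun z => vderivZ (cx f) z) w) (cx N w) = 0) :
    ∀ w ∈ Ω,
      -- (i) `N_z = −Q e^{−û} f_z̄`
      (∀ k, vderivZ (cx N) w k
        = -(hopfQ f N w) * (Real.exp (-uh w) : ℂ) * vderivZbar (cx f) w k) ∧
      -- (ii) `⟨N_z, N_z⟩ = 0` and `⟨N_z, N_z̄⟩ = |Q|² e^{−û}`
      bilin (vderivZ (cx N) w) (vderivZ (cx N) w) = 0 ∧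
      bilin (vderivZ (cx N) w) (vderivZbar (cx N) w)
        = (‖hopfQ f N w‖ : ℂ) ^ 2 * (Real.exp (-uh w) : ℂ) ∧
      -- (iii) properties of the lift `𝔣 = (f + iN)/√2`
      bilin (vderivZ (liftF f N) w) (vderivZ (liftF f N) w) = -Complex.I * hopfQ f N w ∧
      bilin (vderivZ (liftF f N) w) (fun k => conj (vderivZ (liftF f N) w k))
        = ((Real.exp (uh w) : ℂ)
            + (‖hopfQ f N w‖ : ℂ) ^ 2 * (Real.exp (-uh w) : ℂ)) / 2 := by
  intro w hw
  have hΩw : Ω ∈ 𝓝 w := hΩ.mem_nhds hw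
  have hf₂ : ContDiffAt ℝ 2 f w := (hf.contDiffAt hΩw).of_le (WithTop.coe_le_coe.2 le_top)
  have hf₁ : DifferentiableAt ℝ f w := hf₂.differentiableAt two_ne_zero
  have hN₁ : DifferentiableAt ℝ N w := (hN.contDiffAt hΩw).differentiableAt (by simp)
  simp only [bilin_eq_dotProduct] at *
  have hframe := isAdaptedFrame_of_conformal hf₁ (eventually_of_mem hΩw hff)
    (hNN w hw) (hfN w hw) (hNfz w hw) (hconf w hw) (hmetric w hw)
  have hNz := vderivZ_cx_normal hframe hf₂ hN₁ (eventually_of_mem hΩw hNN)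
    (eventually_of_mem hΩw hfN) (eventually_of_mem hΩw hNfz) (hmin w hw)
  rw [← star_vderivZ_cx hf₁, ← star_vderivZ_cx hN₁, vderivZ_liftF hf₁ hN₁]
  refine ⟨fun k => ?_, hframe.Nz_Nz hNz, hframe.Nz_star_Nz hNz, hframe.lift_dotProduct_self hNz,
    hframe.lift_dotProduct_star hNz⟩
  rw [hNz, Pi.smul_apply, smul_eq_mul]
  ring

theorem stmt10 (Ω : Set ℂ) (hΩ : IsOpen Ω)
    (f N : ℂ → Fin 4 → ℝ) (uh : ℂ → ℝ)
    (hf : ContDiffOn ℝ (⊤ : ℕ∞) f Ω)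
    (hN : ContDiffOn ℝ (⊤ : ℕ∞) N Ω)
    (huh : ContDiffOn ℝ (⊤ : ℕ∞) uh Ω)
    (hff : ∀ w ∈ Ω, bilin (cx f w) (cx f w) = 1)
    (hNN : ∀ w ∈ Ω, bilin (cx N w) (cx N w) = 1)
    (hfN : ∀ w ∈ Ω, bilin (cx f w) (cx N w) = 0)
    (hNfz : ∀ w ∈ Ω, bilin (cx N w) (vderivZ (cx f) w) = 0)
    (hconf : ∀ w ∈ Ω, bilin (vderivZ (cx f) w) (vderivZ (cx f) w) = 0)
    (hmetric : ∀ w ∈ Ω,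
      bilin (vderivZ (cx f) w) (vderivZbar (cx f) w) = (Real.exp (uh w) : ℂ))
    (hmin : ∀ w ∈ Ω,
      bilin (vderivZbar (fun z => vderivZ (cx f) z) w) (cx N w) = 0) :
    ∀ w ∈ Ω,
      -- (i) `N_z = −Q e^{−û} f_z̄`
      (∀ k, vderivZ (cx N) w k
        = -(hopfQ f N w) * (Real.exp (-uh w) : ℂ) * vderivZbar (cx f) w k) ∧
      -- (ii) `⟨N_z, N_z⟩ = 0` and `⟨N_z, N_z̄⟩ = |Q|² e^{−û}`
      bilin (vderivZ (cx N) w) (vderivZ (cx N) w) = 0 ∧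
      bilin (vderivZ (cx N) w) (vderivZbar (cx N) w)
        = (‖hopfQ f N w‖ : ℂ) ^ 2 * (Real.exp (-uh w) : ℂ) ∧
      -- (iii) properties of the lift `𝔣 = (f + iN)/√2`
      bilin (vderivZ (liftF f N) w) (vderivZ (liftF f N) w) = -Complex.I * hopfQ f N w ∧
      bilin (vderivZ (liftF f N) w) (fun k => conj (vderivZ (liftF f N) w k))
        = ((Real.exp (uh w) : ℂ)
            + (‖hopfQ f N w‖ : ℂ) ^ 2 * (Real.exp (-uh w) : ℂ)) / 2 :=
  stmt10_general Ω hΩ f N uh hf hN hff hNN hfN hNfz hconf hmetric hmin
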